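/- Let p, q be nonnegative integers with p ≥ 1. Then for all nonnegative integers i, j, A_{p,q}(i,j)/A_{p-1,q}(i,j) ≥ (p+q+j+1)/(p+q+1), where the ratio is taken as a real number. -/

import Mathlib

/-!
The identity
`(p+q+2) A_{p+1,q}(i,j+1) = (p+q+j+3) A_{p,q}(i,j+1) + (i+1) A_{p,q}(i+1,j)`
follows by induction on `(i, j)`: expanding every term by the defining recurrence, the inductive
step is a linear combination of the identities at `(i-1, j)` and `(i, j-1)`.
Dropping the nonnegative last term gives `(p+q+j+2) A_{p,q}(i,j) ≤ (p+q+2) A_{p+1,q}(i,j)`,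
which is the claimed ratio bound after shifting `p`.
-/

/-- The generalized Eulerian number `eulerA p q i j` counts the paths in the Euler graph
from `(p, q)` to `(p + i, q + j)`.  It is defined by the initial conditions
`eulerA p q i 0 = (q+1)^i`, `eulerA p q 0 j = (p+1)^j` and the recurrence
`eulerA p q i j = (j+q+1) * eulerA p q (i-1) j + (i+p+1) * eulerA p q i (j-1)`. -/
def eulerA (p q : ℕ) : ℕ → ℕ → ℕ
  | i, 0 => (q + 1) ^ i
  | 0, j + 1 => (p + 1) ^ (j + 1)
  | i + 1, j + 1 =>
      (j + 1 + q + 1) * eulerA p q i (j + 1) + (i + 1 + p + 1) * eulerA p q (i + 1) j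

section EulerA

variable (p q : ℕ)

@[simp]
theorem eulerA_zero_right (i : ℕ) : eulerA p q i 0 = (q + 1) ^ i := by
  rw [eulerA]

@[simp]
theorem eulerA_zero_succ (j : ℕ) : eulerA p q 0 (j + 1) = (p + 1) ^ (j + 1) := by
  rw [eulerA]

theorem eulerA_succ_succ (i j : ℕ) :
    eulerA p q (i + 1) (j + 1) =
      (j + 1 + q + 1) * eulerA p q i (j + 1) + (i + 1 + p + 1) * eulerA p q (i + 1) j := by
  rw [eulerA]

theorem eulerA_pos : ∀ i j, 0 < eulerA p q i j
  | i, 0 => by simp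
  | 0, j + 1 => by simp
  | i + 1, j + 1 => by
    have := eulerA_pos i (j + 1)
    rw [eulerA_succ_succ]
    positivity

theorem eulerA_succ_left_mul : ∀ i j,
    (p + q + 2) * eulerA (p + 1) q i (j + 1) =
      (p + q + j + 3) * eulerA p q i (j + 1) + (i + 1) * eulerA p q (i + 1) j
  | 0, 0 => by simp only [eulerA_zero_succ, eulerA_zero_right]; ring
  | 0, j + 1 => by
    have ih := eulerA_succ_left_mul 0 j
    simp only [eulerA_zero_succ, eulerA_succ_succ p q 0 j] at ih ⊢
    zify at ih ⊢
    linear_combination ((p : ℤ) + 2) * ih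
  | i + 1, 0 => by
    have ih := eulerA_succ_left_mul i 0
    simp only [eulerA_succ_succ, eulerA_zero_right] at ih ⊢
    zify at ih ⊢
    linear_combination ((q : ℤ) + 2) * ih
  | i + 1, j + 1 => by
    have ih_left := eulerA_succ_left_mul i (j + 1)
    have ih_right := eulerA_succ_left_mul (i + 1) j
    rw [eulerA_succ_succ (p + 1) q i (j + 1), eulerA_succ_succ p q i (j + 1),
      eulerA_succ_succ p q (i + 1) j]
    zify at ih_left ih_right ⊢
    linear_combination ((j : ℤ) + q + 3) * ih_left + ((i : ℤ) + p + 3) * ih_right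

theorem eulerA_mul_le_succ_left (i j : ℕ) :
    (p + q + j + 2) * eulerA p q i j ≤ (p + q + 2) * eulerA (p + 1) q i j := by
  cases j with
  | zero => simp
  | succ j =>
    rw [eulerA_succ_left_mul, show p + q + (j + 1) + 2 = p + q + j + 3 by ring]
    exact Nat.le_add_right _ _

end EulerA

theorem stmt16 (p q : ℕ) (hp : 1 ≤ p) (i j : ℕ) :
    ((p : ℝ) + q + j + 1) / ((p : ℝ) + q + 1) ≤
      (eulerA p q i j : ℝ) / (eulerA (p - 1) q i j) := by
  obtain ⟨p, rfl⟩ := Nat.exists_eq_add_of_le' hp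
  have hpos : (0 : ℝ) < eulerA p q i j := mod_cast eulerA_pos p q i j
  have hle : ((p + q + j + 2 : ℕ) : ℝ) * eulerA p q i j ≤
      ((p + q + 2 : ℕ) : ℝ) * eulerA (p + 1) q i j := mod_cast eulerA_mul_le_succ_left p q i j
  rw [Nat.add_sub_cancel, div_le_div_iff₀ (by positivity) hpos]
  push_cast at hle ⊢
  linarith
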